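/- arXiv:1612.01763 — 7 statements merged into one kernel-verified Lean document; each statement's English description precedes it below -/
import Mathlib

section
/- Let S be an n × n column-substochastic nonnegative matrix (each column sum ≤ 1) which is not column-stochastic (some column sum < 1). Let x ∈ ℝⁿ have strictly positive entries and satisfy S x ≤ x entrywise. Then there exists an n × n column-stochastic nonnegative matrix A with A ≥ S entrywise and A x = x. -/
/-!
Write `φ = x - S x ≥ 0` for the slack of the subinvariance and `ψ = 1 - 1ᵀ S ≥ 0` for the column
defects. Summing `φ` gives `1ᵀ x - 1ᵀ S x = ψ ⬝ x =: λ`, which is positive since `x > 0` and some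
column defect is. The rank-one correction `A = S + λ⁻¹ φ ψᵀ` then fixes `x` (because `ψ ⬝ x = λ`)
and has column sums `1ᵀ S + ψᵀ = 1ᵀ` (because `1 ⬝ φ = λ`), while its entries only grow.
-/

open Matrix

lemma dotProduct_pos_of_nonneg_of_exists_pos {ι R : Type*} [Fintype ι] [Semiring R]
    [PartialOrder R] [IsStrictOrderedRing R] {v w : ι → R} (hv : 0 ≤ v) (hw : ∀ i, 0 < w i)
    (h : ∃ i, 0 < v i) : 0 < v ⬝ᵥ w := by
  obtain ⟨i, hi⟩ := h
  exact Finset.sum_pos' (fun j _ => mul_nonneg (hv j) (hw j).le)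
    ⟨i, Finset.mem_univ i, mul_pos hi (hw i)⟩

namespace Matrix

variable {ι K : Type*} [Fintype ι]

theorem one_vecMul_apply {κ : Type*} [NonAssocSemiring K] (M : Matrix ι κ K) (j : κ) :
    (1 ᵥ* M) j = ∑ i, M i j := by
  simp only [vecMul, dotProduct, Pi.one_apply, one_mul]

theorem one_dotProduct_sub_mulVec [CommRing K] (S : Matrix ι ι K) (x : ι → K) :
    1 ⬝ᵥ (x - S *ᵥ x) = (1 - 1 ᵥ* S) ⬝ᵥ x := by
  rw [dotProduct_sub, sub_dotProduct, dotProduct_mulVec]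

noncomputable def stochasticCorrection [Field K] (S : Matrix ι ι K) (x : ι → K) :
    Matrix ι ι K :=
  S + ((1 - 1 ᵥ* S) ⬝ᵥ x)⁻¹ • vecMulVec (x - S *ᵥ x) (1 - 1 ᵥ* S)

section Field

variable [Field K] {S : Matrix ι ι K} {x : ι → K}

theorem stochasticCorrection_mulVec_self (h : (1 - 1 ᵥ* S) ⬝ᵥ x ≠ 0) :
    stochasticCorrection S x *ᵥ x = x := by
  rw [stochasticCorrection, add_mulVec, smul_mulVec, vecMulVec_mulVec, op_smul_eq_smul,
    smul_smul, inv_mul_cancel₀ h, one_smul, add_sub_cancel]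

theorem one_vecMul_stochasticCorrection (h : (1 - 1 ᵥ* S) ⬝ᵥ x ≠ 0) :
    1 ᵥ* stochasticCorrection S x = 1 := by
  rw [stochasticCorrection, vecMul_add, vecMul_smul, vecMul_vecMulVec,
    one_dotProduct_sub_mulVec, smul_smul, inv_mul_cancel₀ h, one_smul, add_sub_cancel]

end Field

theorem le_stochasticCorrection [Field K] [LinearOrder K] [IsStrictOrderedRing K]
    {S : Matrix ι ι K} {x : ι → K} (hx : 0 ≤ x) (hSx : S *ᵥ x ≤ x) (hsub : 1 ᵥ* S ≤ 1)
    (i j : ι) : S i j ≤ stochasticCorrection S x i j := by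
  have hψ : 0 ≤ 1 - 1 ᵥ* S := sub_nonneg.2 hsub
  have hcorr : 0 ≤ ((1 - 1 ᵥ* S) ⬝ᵥ x)⁻¹ * ((x - S *ᵥ x) i * (1 - 1 ᵥ* S) j) :=
    mul_nonneg (inv_nonneg.2 (dotProduct_nonneg_of_nonneg hψ hx))
      (mul_nonneg (sub_nonneg.2 (hSx i)) (hψ j))
  rw [stochasticCorrection, add_apply, smul_apply, vecMulVec_apply, smul_eq_mul]
  exact le_add_of_nonneg_right hcorr

end Matrix

theorem substochastic_fixed_point_extension {n : ℕ} (S : Matrix (Fin n) (Fin n) ℝ)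
    (hS : ∀ i j, 0 ≤ S i j)
    (hsub : ∀ j, ∑ i, S i j ≤ 1) (hnot : ∃ j, ∑ i, S i j < 1)
    (x : Fin n → ℝ) (hx : ∀ i, 0 < x i) (hSx : ∀ i, S.mulVec x i ≤ x i) :
    ∃ A : Matrix (Fin n) (Fin n) ℝ, (∀ i j, 0 ≤ A i j) ∧ (∀ j, ∑ i, A i j = 1) ∧
      (∀ i j, S i j ≤ A i j) ∧ A.mulVec x = x := by
  have hcol : 1 ᵥ* S ≤ 1 := fun j => (one_vecMul_apply S j).trans_le (hsub j)
  have hdefect : ∃ j, 0 < (1 - 1 ᵥ* S) j := by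
    obtain ⟨j, hj⟩ := hnot
    exact ⟨j, sub_pos.2 ((one_vecMul_apply S j).trans_lt hj)⟩
  have hlam : (1 - 1 ᵥ* S) ⬝ᵥ x ≠ 0 :=
    (dotProduct_pos_of_nonneg_of_exists_pos (sub_nonneg.2 hcol) hx hdefect).ne'
  have hle := le_stochasticCorrection (fun i => (hx i).le) hSx hcol
  refine ⟨stochasticCorrection S x, fun i j => (hS i j).trans (hle i j), fun j => ?_, hle,
    stochasticCorrection_mulVec_self hlam⟩
  rw [← one_vecMul_apply, one_vecMul_stochasticCorrection hlam, Pi.one_apply]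
end

section
/- Let S be an n × n column-substochastic nonnegative matrix. Define C(S) as the set of strictly positive vectors x ∈ ℝⁿ for which there exists a column-stochastic matrix A ≥ S (entrywise) with A x = x. Then C(S) = { x ∈ ℝⁿ : every entry of x is positive and S x ≤ x entrywise }. -/
theorem C_S_characterization {n : ℕ} (S : Matrix (Fin n) (Fin n) ℝ)
    (hS : ∀ i j, 0 ≤ S i j)
    (hsub : ∀ j, ∑ i, S i j ≤ 1) (hnot : ∃ j, ∑ i, S i j < 1) :
    {x : Fin n → ℝ | (∀ i, 0 < x i) ∧
        ∃ A : Matrix (Fin n) (Fin n) ℝ, (∀ i j, 0 ≤ A i j) ∧ (∀ j, ∑ i, A i j = 1) ∧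
          (∀ i j, S i j ≤ A i j) ∧ A.mulVec x = x} =
      {x : Fin n → ℝ | (∀ i, 0 < x i) ∧ ∀ i, S.mulVec x i ≤ x i} := by
  ext x
  simp only [Set.mem_setOf_eq]
  constructor
  · rintro ⟨hx, A, hA0, hA1, hSA, hAx⟩
    refine ⟨hx, fun i => ?_⟩
    calc S.mulVec x i ≤ A.mulVec x i := by
          simp only [Matrix.mulVec, dotProduct]
          apply Finset.sum_le_sum
          intro j _
          exact mul_le_mul_of_nonneg_right (hSA i j) (hx j).le
      _ = x i := congrFun hAx i
  · rintro ⟨hx, hxs⟩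
    refine ⟨hx, ?_⟩
    set d : Fin n → ℝ := fun j => 1 - ∑ i, S i j with hd
    set r : Fin n → ℝ := fun i => x i - S.mulVec x i with hr
    have hd0 : ∀ j, 0 ≤ d j := fun j => by simp [hd]; exact hsub j
    have hr0 : ∀ i, 0 ≤ r i := fun i => by simp [hr]; exact hxs i
    set T : ℝ := ∑ j, d j * x j with hT
    have hT2 : T = ∑ i, r i := by
      simp only [hT, hd, hr, sub_mul, one_mul, Finset.sum_sub_distrib,
        Matrix.mulVec, dotProduct, Finset.sum_mul]
      rw [Finset.sum_comm]
    have hTpos : 0 < T := by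
      obtain ⟨j0, hj0⟩ := hnot
      apply Finset.sum_pos' (fun j _ => mul_nonneg (hd0 j) (hx j).le)
      exact ⟨j0, Finset.mem_univ j0, mul_pos (by simp [hd]; linarith) (hx j0)⟩
    refine ⟨fun i j => S i j + d j * r i / T, ?_, ?_, ?_, ?_⟩
    · intro i j
      have : 0 ≤ d j * r i / T := div_nonneg (mul_nonneg (hd0 j) (hr0 i)) hTpos.le
      linarith [hS i j]
    · intro j
      have : ∑ i, (S i j + d j * r i / T) = (∑ i, S i j) + d j / T * ∑ i, r i := by
        rw [Finset.sum_add_distrib, Finset.mul_sum]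
        congr 1
        apply Finset.sum_congr rfl
        intro i _
        ring
      rw [this, ← hT2, div_mul_cancel₀ _ hTpos.ne', hd]
      ring
    · intro i j
      have : 0 ≤ d j * r i / T := div_nonneg (mul_nonneg (hd0 j) (hr0 i)) hTpos.le
      linarith
    · funext i
      show ∑ j, (S i j + d j * r i / T) * x j = x i
      have : ∑ j, (S i j + d j * r i / T) * x j
          = S.mulVec x i + r i / T * ∑ j, d j * x j := by
        rw [Finset.mul_sum]
        simp only [Matrix.mulVec, dotProduct, ← Finset.sum_add_distrib]
        apply Finset.sum_congr rfl
        intro j _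
        ring
      rw [this, ← hT, div_mul_cancel₀ _ hTpos.ne', hr]
      ring
end

section
/- Let S be an n × n nonnegative matrix and C = { x ∈ ℝⁿ : xᵢ > 0 for all i and S x ≤ x entrywise }. If x₁, …, xₘ ∈ C and α₁, …, αₘ ≥ 0 with Σ αₖ = 1, then the entrywise weighted geometric mean z with zᵢ = ∏ₖ (xₖ)ᵢ^(αₖ) also belongs to C. In particular, C is logarithmically convex. -/
theorem C_S_log_convex {n m : ℕ} (S : Matrix (Fin n) (Fin n) ℝ) (hS : ∀ i j, 0 ≤ S i j)
    (α : Fin m → ℝ) (hα : ∀ k, 0 ≤ α k) (hsum : ∑ k, α k = 1)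
    (x : Fin m → Fin n → ℝ)
    (hx : ∀ k, (∀ i, 0 < x k i) ∧ ∀ i, S.mulVec (x k) i ≤ x k i) :
    (∀ i, 0 < ∏ k, (x k i) ^ (α k)) ∧
    (∀ i, S.mulVec (fun j => ∏ k, (x k j) ^ (α k)) i ≤ ∏ k, (x k i) ^ (α k)) := by
  have hxpos : ∀ k i, 0 < x k i := fun k => (hx k).1
  have hpos : ∀ i, 0 < ∏ k, (x k i) ^ (α k) := fun i =>
    Finset.prod_pos fun k _ => Real.rpow_pos_of_pos (hxpos k i) _
  refine ⟨hpos, fun i => ?_⟩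
  -- A k = (S x_k) i
  set A : Fin m → ℝ := fun k => ∑ j, S i j * x k j with hA
  have hAdef : ∀ k, S.mulVec (x k) i = A k := fun k => by
    simp [Matrix.mulVec, dotProduct, hA]
  have hAnonneg : ∀ k, 0 ≤ A k := fun k =>
    Finset.sum_nonneg fun j _ => mul_nonneg (hS i j) (hxpos k j).le
  have hmv : S.mulVec (fun j => ∏ k, (x k j) ^ (α k)) i
      = ∑ j, S i j * ∏ k, (x k j) ^ (α k) := by
    simp [Matrix.mulVec, dotProduct]
  rw [hmv]
  by_cases hall : ∀ k, 0 < A k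
  · -- main case
    have key : ∑ j, S i j * ∏ k, (x k j) ^ (α k) ≤ ∏ k, (A k) ^ (α k) := by
      have step1 : ∀ j, ∏ k, (x k j) ^ (α k)
          = (∏ k, (A k) ^ (α k)) * ∏ k, (x k j / A k) ^ (α k) := by
        intro j
        rw [← Finset.prod_mul_distrib]
        refine Finset.prod_congr rfl fun k _ => ?_
        rw [← Real.mul_rpow (hall k).le (div_nonneg (hxpos k j).le (hall k).le)]
        rw [mul_div_cancel₀ _ (hall k).ne']
      have step2 : ∀ j, ∏ k, (x k j / A k) ^ (α k) ≤ ∑ k, α k * (x k j / A k) := by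
        intro j
        exact Real.geom_mean_le_arith_mean_weighted _ _ _ (fun k _ => hα k)
          hsum (fun k _ => div_nonneg (hxpos k j).le (hall k).le)
      have step3 : ∑ j, S i j * ∏ k, (x k j / A k) ^ (α k) ≤ 1 := by
        calc ∑ j, S i j * ∏ k, (x k j / A k) ^ (α k)
            ≤ ∑ j, S i j * ∑ k, α k * (x k j / A k) :=
              Finset.sum_le_sum fun j _ =>
                mul_le_mul_of_nonneg_left (step2 j) (hS i j)
          _ = ∑ j, ∑ k, S i j * (α k * (x k j / A k)) := by
              simp_rw [Finset.mul_sum]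
          _ = ∑ k, ∑ j, S i j * (α k * (x k j / A k)) := Finset.sum_comm
          _ = ∑ k, α k * ((∑ j, S i j * x k j) / A k) :=
              Finset.sum_congr rfl fun k _ => by
                rw [Finset.sum_div, Finset.mul_sum]
                exact Finset.sum_congr rfl fun j _ => by ring
          _ = ∑ k, α k := by
              refine Finset.sum_congr rfl fun k _ => ?_
              show α k * (A k / A k) = α k
              rw [div_self (hall k).ne', mul_one]
          _ = 1 := hsum
      calc ∑ j, S i j * ∏ k, (x k j) ^ (α k)
          = (∏ k, (A k) ^ (α k)) * ∑ j, S i j * ∏ k, (x k j / A k) ^ (α k) := by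
            rw [Finset.mul_sum]
            refine Finset.sum_congr rfl fun j _ => ?_
            rw [step1 j]; ring
        _ ≤ (∏ k, (A k) ^ (α k)) * 1 := by
            refine mul_le_mul_of_nonneg_left step3 ?_
            exact Finset.prod_nonneg fun k _ => Real.rpow_nonneg (hAnonneg k) _
        _ = ∏ k, (A k) ^ (α k) := mul_one _
    refine key.trans (Finset.prod_le_prod (fun k _ => Real.rpow_nonneg (hAnonneg k) _)
      fun k _ => Real.rpow_le_rpow (hAnonneg k) ?_ (hα k))
    rw [← hAdef k]; exact (hx k).2 i
  · -- some A k = 0 : the whole row of S is zero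
    push_neg at hall
    obtain ⟨k0, hk0⟩ := hall
    have hA0 : A k0 = 0 := le_antisymm hk0 (hAnonneg k0)
    have hrow : ∀ j, S i j = 0 := by
      intro j
      have := (Finset.sum_eq_zero_iff_of_nonneg
        (fun j _ => mul_nonneg (hS i j) (hxpos k0 j).le)).mp hA0 j (Finset.mem_univ j)
      rcases mul_eq_zero.mp this with h | h
      · exact h
      · exact absurd h (hxpos k0 j).ne'
    have : ∑ j, S i j * ∏ k, (x k j) ^ (α k) = 0 := by
      refine Finset.sum_eq_zero fun j _ => by rw [hrow j, zero_mul]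
    rw [this]
    exact (hpos i).le
end

section
/- Let S be an n × n nonnegative matrix, C = { x ∈ ℝⁿ : x ≫ 0 and Sx ≤ x entrywise }, and let ‖·‖ be a monotone norm on ℝⁿ (i.e. |u| ≤ |v| entrywise implies ‖u‖ ≤ ‖v‖). If x₁, …, xₘ ∈ C and αₖ > 0 with Σ αₖ = 1, then ‖S(x₁^(α₁)∘⋯∘xₘ^(αₘ))‖ ≤ ‖x₁^(α₁)∘⋯∘xₘ^(αₘ)‖ ≤ ‖x₁‖^(α₁) ⋯ ‖xₘ‖^(αₘ), where powers and ∘ are entrywise. -/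
lemma aux_N_nonneg {n : ℕ} (N : (Fin n → ℝ) → ℝ)
    (hN_add : ∀ u v, N (u + v) ≤ N u + N v)
    (hN_smul : ∀ (c : ℝ) u, N (c • u) = |c| * N u) (u : Fin n → ℝ) : 0 ≤ N u := by
  have h0 : N 0 = 0 := by simpa using hN_smul 0 0
  have h1 : N (-u) = N u := by simpa using hN_smul (-1) u
  have h2 := hN_add u (-u)
  rw [add_neg_cancel, h0, h1] at h2
  linarith

lemma aux_N_sum {n : ℕ} {ι : Type*} (N : (Fin n → ℝ) → ℝ)
    (hN_add : ∀ u v, N (u + v) ≤ N u + N v)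
    (hN_smul : ∀ (c : ℝ) u, N (c • u) = |c| * N u)
    (s : Finset ι) (f : ι → Fin n → ℝ) :
    N (∑ k ∈ s, f k) ≤ ∑ k ∈ s, N (f k) := by
  classical
  have h0 : N 0 = 0 := by simpa using hN_smul 0 0
  induction s using Finset.induction with
  | empty => simp [h0]
  | @insert a s ha ih =>
    rw [Finset.sum_insert ha, Finset.sum_insert ha]
    exact le_trans (hN_add _ _) (by linarith)

lemma aux_geom {n m : ℕ} (N : (Fin n → ℝ) → ℝ)
    (hN_add : ∀ u v, N (u + v) ≤ N u + N v)
    (hN_smul : ∀ (c : ℝ) u, N (c • u) = |c| * N u)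
    (hN_mono : ∀ u v, (∀ i, |u i| ≤ |v i|) → N u ≤ N v)
    (α : Fin m → ℝ) (hα : ∀ k, 0 < α k) (hsum : ∑ k, α k = 1)
    (x : Fin m → Fin n → ℝ) (hxpos : ∀ k i, 0 < x k i) :
    N (fun j => ∏ k, (x k j) ^ (α k)) ≤ ∏ k, (N (x k)) ^ (α k) := by
  set y : Fin n → ℝ := fun j => ∏ k, (x k j) ^ (α k) with hy
  have hypos : ∀ j, 0 < y j := fun j =>
    Finset.prod_pos fun k _ => Real.rpow_pos_of_pos (hxpos k j) _
  have hNnn : ∀ u, 0 ≤ N u := aux_N_nonneg N hN_add hN_smul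
  have hRHSnn : 0 ≤ ∏ k, (N (x k)) ^ (α k) :=
    Finset.prod_nonneg fun k _ => Real.rpow_nonneg (hNnn _) _
  by_cases hz : ∃ k₀, N (x k₀) = 0
  · obtain ⟨k₀, hk₀⟩ := hz
    set t : ℝ := 1 + ∑ j, y j / x k₀ j with ht
    clear_value t
    have hs0 : 0 ≤ ∑ j, y j / x k₀ j :=
      Finset.sum_nonneg fun j _ => div_nonneg (hypos j).le (hxpos k₀ j).le
    have htpos : 0 < t := by rw [ht]; linarith
    have hle : ∀ j, |y j| ≤ |(t • x k₀) j| := by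
      intro j
      have h1 : y j / x k₀ j ≤ ∑ j', y j' / x k₀ j' :=
        Finset.single_le_sum (f := fun j' => y j' / x k₀ j')
          (fun j' _ => div_nonneg (hypos j').le (hxpos k₀ j').le) (Finset.mem_univ j)
      have hst : (∑ j', y j' / x k₀ j') ≤ t := by rw [ht]; linarith
      have h2 : y j ≤ t * x k₀ j := by
        rw [div_le_iff₀ (hxpos k₀ j)] at h1
        exact le_trans h1 (mul_le_mul_of_nonneg_right hst (hxpos k₀ j).le)
      rw [abs_of_pos (hypos j), Pi.smul_apply, smul_eq_mul,
        abs_of_pos (mul_pos htpos (hxpos k₀ j))]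
      exact h2
    calc N y ≤ N (t • x k₀) := hN_mono _ _ hle
      _ = |t| * N (x k₀) := hN_smul _ _
      _ = 0 := by rw [hk₀, mul_zero]
      _ ≤ _ := hRHSnn
  · push_neg at hz
    have hc : ∀ k, 0 < N (x k) := fun k => lt_of_le_of_ne (hNnn _) (Ne.symm (hz k))
    set P : ℝ := ∏ k, (N (x k)) ^ (α k) with hP
    have hPpos : 0 < P := Finset.prod_pos fun k _ => Real.rpow_pos_of_pos (hc k) _
    set z : Fin n → ℝ := ∑ k, (α k / N (x k)) • x k with hzdef
    have hzval : ∀ j, z j = ∑ k, α k / N (x k) * x k j := by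
      intro j; simp [hzdef]
    have hkey : ∀ j, |y j| ≤ |(P • z) j| := by
      intro j
      have hamgm : ∏ k, (x k j / N (x k)) ^ (α k) ≤ ∑ k, α k * (x k j / N (x k)) :=
        Real.geom_mean_le_arith_mean_weighted Finset.univ α _
          (fun k _ => (hα k).le) hsum
          (fun k _ => div_nonneg (hxpos k j).le (hc k).le)
      have hsplit : y j = P * ∏ k, (x k j / N (x k)) ^ (α k) := by
        rw [hP, ← Finset.prod_mul_distrib]
        refine Finset.prod_congr rfl fun k _ => ?_
        rw [Real.div_rpow (hxpos k j).le (hc k).le]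
        have hne : (N (x k)) ^ α k ≠ 0 := ne_of_gt (Real.rpow_pos_of_pos (hc k) _)
        field_simp
      have h1 : y j ≤ P * z j := by
        rw [hsplit, hzval j]
        refine mul_le_mul_of_nonneg_left (le_trans hamgm ?_) hPpos.le
        apply le_of_eq
        refine Finset.sum_congr rfl fun k _ => ?_
        ring
      have hPz : 0 < P * z j := lt_of_lt_of_le (hypos j) (hsplit ▸ h1)
      rw [abs_of_pos (hypos j), Pi.smul_apply, smul_eq_mul, abs_of_pos hPz]
      exact h1
    have hNz : N z ≤ 1 := by
      calc N z ≤ ∑ k, N ((α k / N (x k)) • x k) := aux_N_sum N hN_add hN_smul _ _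
        _ = ∑ k, α k := by
            refine Finset.sum_congr rfl fun k _ => ?_
            rw [hN_smul, abs_of_pos (div_pos (hα k) (hc k))]
            exact div_mul_cancel₀ _ (hz k)
        _ = 1 := hsum
    calc N y ≤ N (P • z) := hN_mono _ _ hkey
      _ = |P| * N z := hN_smul _ _
      _ = P * N z := by rw [abs_of_pos hPpos]
      _ ≤ P * 1 := mul_le_mul_of_nonneg_left hNz hPpos.le
      _ = P := mul_one P

theorem C_S_norm_ineq {n m : ℕ} (S : Matrix (Fin n) (Fin n) ℝ) (hS : ∀ i j, 0 ≤ S i j)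
    (N : (Fin n → ℝ) → ℝ)
    (hN_add : ∀ u v, N (u + v) ≤ N u + N v)
    (hN_smul : ∀ (c : ℝ) u, N (c • u) = |c| * N u)
    (hN_mono : ∀ u v, (∀ i, |u i| ≤ |v i|) → N u ≤ N v)
    (α : Fin m → ℝ) (hα : ∀ k, 0 < α k) (hsum : ∑ k, α k = 1)
    (x : Fin m → Fin n → ℝ)
    (hx : ∀ k, (∀ i, 0 < x k i) ∧ ∀ i, S.mulVec (x k) i ≤ x k i) :
    N (S.mulVec (fun j => ∏ k, (x k j) ^ (α k))) ≤ N (fun j => ∏ k, (x k j) ^ (α k)) ∧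
    N (fun j => ∏ k, (x k j) ^ (α k)) ≤ ∏ k, (N (x k)) ^ (α k) := by
  have hxpos : ∀ k i, 0 < x k i := fun k => (hx k).1
  set y : Fin n → ℝ := fun j => ∏ k, (x k j) ^ (α k) with hy
  have hypos : ∀ j, 0 < y j := fun j =>
    Finset.prod_pos fun k _ => Real.rpow_pos_of_pos (hxpos k j) _
  constructor
  · -- part 1: S y ≤ y entrywise, and S y ≥ 0
    have key : ∀ i, 0 ≤ S.mulVec y i ∧ S.mulVec y i ≤ y i := by
      intro i
      set Ni : (Fin n → ℝ) → ℝ := fun u => ∑ j, S i j * |u j| with hNi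
      have hNi_add : ∀ u v, Ni (u + v) ≤ Ni u + Ni v := by
        intro u v
        rw [hNi, ← Finset.sum_add_distrib]
        refine Finset.sum_le_sum fun j _ => ?_
        rw [← mul_add]
        exact mul_le_mul_of_nonneg_left (abs_add_le _ _) (hS i j)
      have hNi_smul : ∀ (c : ℝ) u, Ni (c • u) = |c| * Ni u := by
        intro c u
        simp only [hNi, Pi.smul_apply, smul_eq_mul, abs_mul, Finset.mul_sum]
        exact Finset.sum_congr rfl fun j _ => by ring
      have hNi_mono : ∀ u v, (∀ j, |u j| ≤ |v j|) → Ni u ≤ Ni v := by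
        intro u v huv
        exact Finset.sum_le_sum fun j _ =>
          mul_le_mul_of_nonneg_left (huv j) (hS i j)
      have hNiu : ∀ u, (∀ j, 0 ≤ u j) → Ni u = S.mulVec u i := by
        intro u hu
        simp only [hNi, Matrix.mulVec, dotProduct]
        exact Finset.sum_congr rfl fun j _ => by rw [abs_of_nonneg (hu j)]
      have h1 : Ni y ≤ ∏ k, (Ni (x k)) ^ (α k) :=
        aux_geom Ni hNi_add hNi_smul hNi_mono α hα hsum x hxpos
      have h2 : ∏ k, (Ni (x k)) ^ (α k) ≤ y i := by
        refine Finset.prod_le_prod (fun k _ => Real.rpow_nonneg ?_ _) fun k _ => ?_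
        · exact aux_N_nonneg Ni hNi_add hNi_smul _
        · refine Real.rpow_le_rpow (aux_N_nonneg Ni hNi_add hNi_smul _) ?_ (hα k).le
          rw [hNiu (x k) fun j => (hxpos k j).le]
          exact (hx k).2 i
      have hyi : S.mulVec y i = Ni y := (hNiu y fun j => (hypos j).le).symm
      refine ⟨?_, ?_⟩
      · rw [hyi]
        exact Finset.sum_nonneg fun j _ => mul_nonneg (hS i j) (abs_nonneg _)
      · rw [hyi]; exact le_trans h1 h2
    refine hN_mono _ _ fun i => ?_
    rw [abs_of_nonneg (key i).1, abs_of_pos (hypos i)]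
    exact (key i).2
  · exact aux_geom N hN_add hN_smul hN_mono α hα hsum x hxpos
end

section
/- Let ‖·‖ be a monotone norm on ℝⁿ (|u| ≤ |v| entrywise implies ‖u‖ ≤ ‖v‖). For nonnegative vectors x₁, …, xₘ in ℝⁿ and αₖ > 0 with Σ αₖ = 1, one has ‖x₁^(α₁) ∘ ⋯ ∘ xₘ^(αₘ)‖ ≤ ‖x₁‖^(α₁) ⋯ ‖xₘ‖^(αₘ), where powers and ∘ are entrywise. -/
/-!
Pointwise weighted AM–GM, monotonicity and the triangle inequality give
`N (∏ₖ xₖ ^ αₖ) ≤ ∑ₖ αₖ N xₖ`. The left side is homogeneous of degree `αₖ` in each `xₖ`, so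
applying this to `xₖ / (N xₖ + ε)`, whose norms are at most one, yields
`N (∏ₖ xₖ ^ αₖ) ≤ ∏ₖ (N xₖ + ε) ^ αₖ`; then let `ε → 0`. The `ε` keeps the rescaling defined
when some `N xₖ` vanishes.
-/

open Finset Filter Topology

variable {ι κ : Type*} [Fintype κ]

lemma prod_smul_apply_rpow {α c : κ → ℝ} {x : κ → ι → ℝ} (hc : ∀ k, 0 ≤ c k)
    (hx : ∀ k i, 0 ≤ x k i) :
    (fun i => ∏ k, (c k • x k) i ^ α k) = (∏ k, c k ^ α k) • fun i => ∏ k, x k i ^ α k := by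
  funext i
  simp only [Pi.smul_apply, smul_eq_mul, Real.mul_rpow (hc _) (hx _ i), prod_mul_distrib]

namespace Seminorm

variable (p : Seminorm ℝ (ι → ℝ)) {α : κ → ℝ} {x : κ → ι → ℝ}

lemma apply_prod_rpow_le_sum (hp : MonotoneOn p (Set.Ici 0)) (hα : ∀ k, 0 ≤ α k)
    (hsum : ∑ k, α k = 1) (hx : ∀ k i, 0 ≤ x k i) :
    p (fun i => ∏ k, x k i ^ α k) ≤ ∑ k, α k * p (x k) := by
  have hgeom_nonneg : 0 ≤ fun i => ∏ k, x k i ^ α k := fun i =>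
    prod_nonneg fun k _ => Real.rpow_nonneg (hx k i) _
  have hgeom_le_arith : (fun i => ∏ k, x k i ^ α k) ≤ ∑ k, α k • x k := fun i => by
    simpa using Real.geom_mean_le_arith_mean_weighted univ α (x · i) (fun k _ => hα k) hsum
      (fun k _ => hx k i)
  calc p (fun i => ∏ k, x k i ^ α k)
      ≤ p (∑ k, α k • x k) :=
        hp hgeom_nonneg (hgeom_nonneg.trans hgeom_le_arith) hgeom_le_arith
    _ ≤ ∑ k, p (α k • x k) := le_sum_of_subadditive p (map_zero p).le (map_add_le_add p) _ _
    _ = ∑ k, α k * p (x k) := by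
        simp only [map_smul_eq_mul, Real.norm_of_nonneg (hα _)]

lemma apply_prod_rpow_le_prod_add (hp : MonotoneOn p (Set.Ici 0)) (hα : ∀ k, 0 ≤ α k)
    (hsum : ∑ k, α k = 1) (hx : ∀ k i, 0 ≤ x k i) {ε : ℝ} (hε : 0 < ε) :
    p (fun i => ∏ k, x k i ^ α k) ≤ ∏ k, (p (x k) + ε) ^ α k := by
  set a : κ → ℝ := fun k => p (x k) + ε
  have ha : ∀ k, 0 < a k := fun k => add_pos_of_nonneg_of_pos (apply_nonneg p _) hε
  have hA : 0 < ∏ k, a k ^ α k := prod_pos fun k _ => Real.rpow_pos_of_pos (ha k) _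
  have hscaled := p.apply_prod_rpow_le_sum hp hα hsum (x := fun k => (a k)⁻¹ • x k)
    fun k i => mul_nonneg (inv_nonneg.2 (ha k).le) (hx k i)
  rw [prod_smul_apply_rpow (fun k => inv_nonneg.2 (ha k).le) hx, map_smul_eq_mul,
    Real.norm_of_nonneg (prod_nonneg fun k _ => Real.rpow_nonneg (inv_nonneg.2 (ha k).le) _)]
    at hscaled
  simp only [Real.inv_rpow (ha _).le, prod_inv_distrib, map_smul_eq_mul,
    Real.norm_of_nonneg (inv_nonneg.2 (ha _).le)] at hscaled
  have hterm : ∀ k, α k * ((a k)⁻¹ * p (x k)) ≤ α k := fun k =>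
    mul_le_of_le_one_right (hα k) ((inv_mul_le_one₀ (ha k)).2 (le_add_of_nonneg_right hε.le))
  have hle := hscaled.trans ((sum_le_sum fun k _ => hterm k).trans hsum.le)
  rwa [inv_mul_le_iff₀ hA, mul_one] at hle

lemma apply_prod_rpow_le_prod (hp : MonotoneOn p (Set.Ici 0)) (hα : ∀ k, 0 ≤ α k)
    (hsum : ∑ k, α k = 1) (hx : ∀ k i, 0 ≤ x k i) :
    p (fun i => ∏ k, x k i ^ α k) ≤ ∏ k, p (x k) ^ α k := by
  have hcont : Continuous fun ε : ℝ => ∏ k, (p (x k) + ε) ^ α k :=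
    continuous_finsetProd _ fun k _ =>
      (continuous_const.add continuous_id).rpow_const fun _ => Or.inr (hα k)
  have hlim : Tendsto (fun ε => ∏ k, (p (x k) + ε) ^ α k) (𝓝[>] 0)
      (𝓝 (∏ k, p (x k) ^ α k)) := by
    simpa using (hcont.tendsto 0).mono_left nhdsWithin_le_nhds
  exact ge_of_tendsto hlim (eventually_nhdsWithin_of_forall fun ε hε =>
    p.apply_prod_rpow_le_prod_add hp hα hsum hx hε)

end Seminorm

theorem monotone_norm_geom_mean {n m : ℕ} (N : (Fin n → ℝ) → ℝ)
    (hN_add : ∀ u v, N (u + v) ≤ N u + N v)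
    (hN_smul : ∀ (c : ℝ) u, N (c • u) = |c| * N u)
    (hN_mono : ∀ u v, (∀ i, |u i| ≤ |v i|) → N u ≤ N v)
    (α : Fin m → ℝ) (hα : ∀ k, 0 < α k) (hsum : ∑ k, α k = 1)
    (x : Fin m → Fin n → ℝ) (hx : ∀ k i, 0 ≤ x k i) :
    N (fun i => ∏ k, (x k i) ^ (α k)) ≤ ∏ k, (N (x k)) ^ (α k) := by
  let p : Seminorm ℝ (Fin n → ℝ) := Seminorm.of N hN_add hN_smul
  have hp : MonotoneOn p (Set.Ici 0) := fun u hu v hv huv =>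
    hN_mono u v fun i => by rw [abs_of_nonneg (hu i), abs_of_nonneg (hv i)]; exact huv i
  exact p.apply_prod_rpow_le_prod hp (fun k => (hα k).le) hsum hx
end

section
/- Let L be an ideal of measurable functions and ‖·‖ a lattice seminorm on L (|f| ≤ |g| a.e. implies ‖f‖ ≤ ‖g‖). For f₁, …, fₘ ∈ L and α₁, …, αₘ > 0 with Σ αᵢ = 1, the pointwise product |f₁|^(α₁) ⋯ |fₘ|^(αₘ) belongs to L and ‖ |f₁|^(α₁) ⋯ |fₘ|^(αₘ) ‖ ≤ ‖f₁‖^(α₁) ⋯ ‖fₘ‖^(αₘ). -/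
/-!
Weighted AM–GM applied to the numbers `|fᵢ x| / cᵢ` gives, for any `cᵢ > 0`, the pointwise bound
`∏ |fᵢ x| ^ αᵢ ≤ (∏ cᵢ ^ αᵢ) · ∑ (αᵢ / cᵢ) |fᵢ x|`, whose right-hand side lies in `L`.
With `cᵢ = 1` this gives membership; with `cᵢ = N fᵢ + ε` the seminorm of the right-hand side is
at most `∏ (N fᵢ + ε) ^ αᵢ`, and `ε → 0` finishes.
-/

open MeasureTheory Filter Topology

theorem Real.geom_mean_le_scaled_arith_mean_weighted {ι : Type*} (s : Finset ι) {w z c : ι → ℝ}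
    (hw : ∀ i ∈ s, 0 ≤ w i) (hw₁ : ∑ i ∈ s, w i = 1) (hz : ∀ i ∈ s, 0 ≤ z i)
    (hc : ∀ i ∈ s, 0 < c i) :
    ∏ i ∈ s, z i ^ w i ≤ (∏ i ∈ s, c i ^ w i) * ∑ i ∈ s, w i / c i * z i := by
  have hzc : ∀ i ∈ s, 0 ≤ z i / c i := fun i hi => div_nonneg (hz i hi) (hc i hi).le
  calc ∏ i ∈ s, z i ^ w i = (∏ i ∈ s, c i ^ w i) * ∏ i ∈ s, (z i / c i) ^ w i := by
        rw [← Finset.prod_mul_distrib]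
        refine Finset.prod_congr rfl fun i hi => ?_
        rw [← Real.mul_rpow (hc i hi).le (hzc i hi), mul_div_cancel₀ _ (hc i hi).ne']
    _ ≤ (∏ i ∈ s, c i ^ w i) * ∑ i ∈ s, w i * (z i / c i) :=
        mul_le_mul_of_nonneg_left (Real.geom_mean_le_arith_mean_weighted s w _ hw hw₁ hzc)
          (Finset.prod_nonneg fun i hi => Real.rpow_nonneg (hc i hi).le _)
    _ = (∏ i ∈ s, c i ^ w i) * ∑ i ∈ s, w i / c i * z i := by
        simp only [mul_div_assoc', div_mul_eq_mul_div]

theorem le_prod_rpow_of_forall_pos_le_prod_add_rpow {ι : Type*} (s : Finset ι) {a w : ι → ℝ}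
    (hw : ∀ i ∈ s, 0 ≤ w i) {b : ℝ} (hb : ∀ ε > 0, b ≤ ∏ i ∈ s, (a i + ε) ^ w i) :
    b ≤ ∏ i ∈ s, a i ^ w i := by
  have hlim : Tendsto (fun ε : ℝ => ∏ i ∈ s, (a i + ε) ^ w i) (𝓝[>] 0)
      (𝓝 (∏ i ∈ s, a i ^ w i)) := by
    refine tendsto_finsetProd s fun i hi => ?_
    have hcont : ContinuousAt (fun ε : ℝ => (a i + ε) ^ w i) 0 :=
      (continuous_const.add continuous_id).continuousAt.rpow_const (Or.inr (hw i hi))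
    simpa using hcont.tendsto.mono_left nhdsWithin_le_nhds
  exact ge_of_tendsto hlim (eventually_nhdsWithin_of_forall hb)

section FunctionIdeal

variable {X : Type*} [MeasurableSpace X]

structure IsFunctionIdeal (μ : Measure X) (S : Submodule ℝ (X → ℝ)) : Prop where
  measurable : ∀ f ∈ S, Measurable f
  mem_of_ae_abs_le : ∀ f : X → ℝ, Measurable f → ∀ g ∈ S, (∀ᵐ x ∂μ, |f x| ≤ |g x|) → f ∈ S

def Seminorm.IsLatticeOn (p : Seminorm ℝ (X → ℝ)) (μ : Measure X) (S : Submodule ℝ (X → ℝ)) :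
    Prop :=
  ∀ f ∈ S, ∀ g ∈ S, (∀ᵐ x ∂μ, |f x| ≤ |g x|) → p f ≤ p g

variable {μ : Measure X} {S : Submodule ℝ (X → ℝ)} {ι : Type*} [Fintype ι]

theorem IsFunctionIdeal.abs_mem (hS : IsFunctionIdeal μ S) {f : X → ℝ} (hf : f ∈ S) :
    (fun x => |f x|) ∈ S :=
  hS.mem_of_ae_abs_le _ (hS.measurable f hf).abs f hf (.of_forall fun _ => (abs_abs _).le)

theorem IsFunctionIdeal.geomMean_mem (hS : IsFunctionIdeal μ S) {f : ι → X → ℝ}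
    (hf : ∀ i, f i ∈ S) {α : ι → ℝ} (hα : ∀ i, 0 ≤ α i) (hα₁ : ∑ i, α i = 1) :
    (fun x => ∏ i, |f i x| ^ α i) ∈ S := by
  have hmeas : Measurable fun x => ∏ i, |f i x| ^ α i := by
    have := fun i => hS.measurable _ (hf i)
    fun_prop
  have hdom : (∑ i, α i • fun x => |f i x|) ∈ S :=
    S.sum_mem fun i _ => S.smul_mem _ (hS.abs_mem (hf i))
  refine hS.mem_of_ae_abs_le _ hmeas _ hdom (.of_forall fun x => ?_)
  have hgm := Real.geom_mean_le_arith_mean_weighted Finset.univ α (fun i => |f i x|)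
    (fun i _ => hα i) hα₁ (fun i _ => abs_nonneg _)
  simp only [Finset.sum_apply, Pi.smul_apply, smul_eq_mul]
  exact (le_abs_self _).trans' ((abs_of_nonneg (by positivity)).trans_le hgm)

variable {p : Seminorm ℝ (X → ℝ)}

theorem Seminorm.IsLatticeOn.apply_abs_le (hp : p.IsLatticeOn μ S) (hS : IsFunctionIdeal μ S)
    {f : X → ℝ} (hf : f ∈ S) : p (fun x => |f x|) ≤ p f :=
  hp _ (hS.abs_mem hf) _ hf (.of_forall fun _ => (abs_abs _).le)

theorem Seminorm.IsLatticeOn.geomMean_le_prod_add_rpow (hp : p.IsLatticeOn μ S)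
    (hS : IsFunctionIdeal μ S) {f : ι → X → ℝ} (hf : ∀ i, f i ∈ S) {α : ι → ℝ}
    (hα : ∀ i, 0 ≤ α i) (hα₁ : ∑ i, α i = 1) {ε : ℝ} (hε : 0 < ε) :
    p (fun x => ∏ i, |f i x| ^ α i) ≤ ∏ i, (p (f i) + ε) ^ α i := by
  set c : ι → ℝ := fun i => p (f i) + ε
  have hc : ∀ i, 0 < c i := fun i => add_pos_of_nonneg_of_pos (apply_nonneg _ _) hε
  set C := ∏ i, c i ^ α i
  have hC : 0 ≤ C := Finset.prod_nonneg fun i _ => Real.rpow_nonneg (hc i).le _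
  set h := ∑ i, (α i / c i) • fun x => |f i x|
  have hhS : h ∈ S := S.sum_mem fun i _ => S.smul_mem _ (hS.abs_mem (hf i))
  have hdom : ∀ x, |∏ i, |f i x| ^ α i| ≤ |(C • h) x| := by
    intro x
    have hyoung := Real.geom_mean_le_scaled_arith_mean_weighted Finset.univ (fun i _ => hα i) hα₁
      (fun i _ => abs_nonneg (f i x)) (fun i _ => hc i)
    simp only [h, Pi.smul_apply, Finset.sum_apply, smul_eq_mul]
    exact (le_abs_self _).trans' ((abs_of_nonneg (by positivity)).trans_le hyoung)
  have hph : p h ≤ 1 := calc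
    p h ≤ ∑ i, p ((α i / c i) • fun x => |f i x|) :=
      Finset.le_sum_of_subadditive p (map_zero p).le (map_add_le_add p) _ _
    _ ≤ ∑ i, α i := Finset.sum_le_sum fun i _ => by
      rw [map_smul_eq_mul, Real.norm_of_nonneg (div_nonneg (hα i) (hc i).le)]
      calc α i / c i * p (fun x => |f i x|) ≤ α i / c i * c i := by
            gcongr
            · exact div_nonneg (hα i) (hc i).le
            · exact (hp.apply_abs_le hS (hf i)).trans (le_add_of_nonneg_right hε.le)
        _ = α i := div_mul_cancel₀ _ (hc i).ne'
    _ = 1 := hα₁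
  calc p (fun x => ∏ i, |f i x| ^ α i) ≤ p (C • h) :=
        hp _ (hS.geomMean_mem hf hα hα₁) _ (S.smul_mem C hhS) (.of_forall hdom)
    _ = C * p h := by rw [map_smul_eq_mul, Real.norm_of_nonneg hC]
    _ ≤ C := mul_le_of_le_one_right hC hph

theorem Seminorm.IsLatticeOn.geomMean_le (hp : p.IsLatticeOn μ S)
    (hS : IsFunctionIdeal μ S) {f : ι → X → ℝ} (hf : ∀ i, f i ∈ S) {α : ι → ℝ}
    (hα : ∀ i, 0 ≤ α i) (hα₁ : ∑ i, α i = 1) :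
    p (fun x => ∏ i, |f i x| ^ α i) ≤ ∏ i, p (f i) ^ α i :=
  le_prod_rpow_of_forall_pos_le_prod_add_rpow _ (fun i _ => hα i) fun _ hε =>
    hp.geomMean_le_prod_add_rpow hS hf hα hα₁ hε

end FunctionIdeal

theorem lattice_seminorm_geom_mean_general {X : Type*} [MeasurableSpace X] (μ : Measure X)
    (L : Set (X → ℝ))
    (hL_meas : ∀ f ∈ L, Measurable f)
    (hL_add : ∀ f ∈ L, ∀ g ∈ L, f + g ∈ L)
    (hL_smul : ∀ (c : ℝ), ∀ f ∈ L, c • f ∈ L)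
    (hL_ideal : ∀ f : X → ℝ, Measurable f → ∀ g ∈ L,
      (∀ᵐ x ∂μ, |f x| ≤ |g x|) → f ∈ L)
    (N : (X → ℝ) → ℝ)
    (hN_add : ∀ f g, N (f + g) ≤ N f + N g)
    (hN_smul : ∀ (c : ℝ) f, N (c • f) = |c| * N f)
    (hN_mono : ∀ f ∈ L, ∀ g ∈ L, (∀ᵐ x ∂μ, |f x| ≤ |g x|) → N f ≤ N g)
    {m : ℕ} (f : Fin m → X → ℝ) (hf : ∀ i, f i ∈ L)
    (α : Fin m → ℝ) (hα : ∀ i, 0 < α i) (hsum : ∑ i, α i = 1) :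
    (fun x => ∏ i, |f i x| ^ (α i)) ∈ L ∧
    N (fun x => ∏ i, |f i x| ^ (α i)) ≤ ∏ i, (N (f i)) ^ (α i) := by
  obtain ⟨i₀, -⟩ := Finset.nonempty_of_sum_ne_zero (hsum ▸ one_ne_zero)
  let S : Submodule ℝ (X → ℝ) :=
    { carrier := L
      add_mem' := fun ha hb => hL_add _ ha _ hb
      zero_mem' := by simpa using hL_smul 0 _ (hf i₀)
      smul_mem' := fun c _ ha => hL_smul c _ ha }
  let p : Seminorm ℝ (X → ℝ) := .of N hN_add hN_smul
  have hS : IsFunctionIdeal μ S := ⟨hL_meas, hL_ideal⟩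
  have hp : p.IsLatticeOn μ S := hN_mono
  have hα' : ∀ i, 0 ≤ α i := fun i => (hα i).le
  exact ⟨hS.geomMean_mem hf hα' hsum, hp.geomMean_le hS hf hα' hsum⟩

theorem lattice_seminorm_geom_mean {X : Type*} [MeasurableSpace X] (μ : Measure X)
    [SigmaFinite μ] (L : Set (X → ℝ))
    (hL_meas : ∀ f ∈ L, Measurable f)
    (hL_add : ∀ f ∈ L, ∀ g ∈ L, f + g ∈ L)
    (hL_smul : ∀ (c : ℝ), ∀ f ∈ L, c • f ∈ L)
    (hL_ideal : ∀ f : X → ℝ, Measurable f → ∀ g ∈ L,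
      (∀ᵐ x ∂μ, |f x| ≤ |g x|) → f ∈ L)
    (N : (X → ℝ) → ℝ)
    (hN_add : ∀ f g, N (f + g) ≤ N f + N g)
    (hN_smul : ∀ (c : ℝ) f, N (c • f) = |c| * N f)
    (hN_mono : ∀ f ∈ L, ∀ g ∈ L, (∀ᵐ x ∂μ, |f x| ≤ |g x|) → N f ≤ N g)
    {m : ℕ} (f : Fin m → X → ℝ) (hf : ∀ i, f i ∈ L)
    (α : Fin m → ℝ) (hα : ∀ i, 0 < α i) (hsum : ∑ i, α i = 1) :
    (fun x => ∏ i, |f i x| ^ (α i)) ∈ L ∧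
    N (fun x => ∏ i, |f i x| ^ (α i)) ≤ ∏ i, (N (f i)) ^ (α i) :=
  lattice_seminorm_geom_mean_general μ L hL_meas hL_add hL_smul hL_ideal N hN_add hN_smul hN_mono f
    hf α hα hsum
end

section
/- Let S be a kernel operator with nonnegative kernel s on a σ-finite measure space (X, μ), mapping nonnegative measurable functions to nonnegative measurable functions. Let C = { f : f > 0 a.e. and Sf ≤ f a.e. }. If f, g ∈ C and 0 < α < 1, then for any lattice seminorm ‖·‖ on the ideal generated, ‖S(f^α g^(1−α))‖ ≤ ‖f^α g^(1−α)‖ ≤ ‖f‖^α ‖g‖^(1−α). -/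
open MeasureTheory

/-! `S` acts at each point `x` as integration against the measure `μ.withDensity (s x)`, so
Hölder's inequality for that measure gives `S(f^α g^(1-α)) ≤ (Sf)^α (Sg)^(1-α)`, and the cone of
`S`-excessive functions is closed under weighted geometric means. For the seminorm, weighted
AM-GM gives `N(f^α g^(1-α)) ≤ α N f + (1-α) N g`, which is `≤ 1` when `N f, N g ≤ 1`;
homogeneity rescales the general case to this one. If `N f = 0` then `N (⊤ • f) = 0`, and
`⊤ • f` dominates `f^α g^(1-α)` because `0 ^ α = 0`. -/

theorem ENNReal.geom_mean_le_arith_mean2_weighted {w₁ w₂ : ℝ} (hw₁ : 0 < w₁) (hw₂ : 0 < w₂)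
    (hw : w₁ + w₂ = 1) (p₁ p₂ : ENNReal) :
    p₁ ^ w₁ * p₂ ^ w₂ ≤ ENNReal.ofReal w₁ * p₁ + ENNReal.ofReal w₂ * p₂ := by
  have h := ENNReal.young_inequality (p₁ ^ w₁) (p₂ ^ w₂) (Real.HolderConjugate.inv_inv hw₁ hw₂ hw)
  rwa [← ENNReal.rpow_mul, ← ENNReal.rpow_mul, mul_inv_cancel₀ hw₁.ne', mul_inv_cancel₀ hw₂.ne',
    ENNReal.rpow_one, ENNReal.rpow_one, ENNReal.ofReal_inv_of_pos hw₁,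
    ENNReal.ofReal_inv_of_pos hw₂, div_eq_mul_inv, div_eq_mul_inv, inv_inv, inv_inv,
    mul_comm p₁, mul_comm p₂] at h

theorem lintegral_mul_rpow_mul_rpow_le {X : Type*} [MeasurableSpace X] {μ : Measure X}
    {k f g : X → ENNReal} (hk : AEMeasurable k μ) (hf : AEMeasurable f μ)
    (hg : AEMeasurable g μ) {p q : ℝ} (hp : 0 ≤ p) (hq : 0 ≤ q) (hpq : p + q = 1) :
    ∫⁻ y, k y * (f y ^ p * g y ^ q) ∂μ ≤
      (∫⁻ y, k y * f y ∂μ) ^ p * (∫⁻ y, k y * g y ∂μ) ^ q := by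
  have hac := withDensity_absolutelyContinuous μ k
  have := ENNReal.lintegral_mul_norm_pow_le (hf.mono_ac hac) (hg.mono_ac hac) hp hq hpq
  rwa [lintegral_withDensity_eq_lintegral_mul₀ hk (g := fun y => f y ^ p * g y ^ q)
    ((hf.pow_const p).mul (hg.pow_const q)), lintegral_withDensity_eq_lintegral_mul₀ hk hf,
    lintegral_withDensity_eq_lintegral_mul₀ hk hg] at this

theorem ae_lintegral_mul_rpow_mul_rpow_le {X : Type*} [MeasurableSpace X] {μ : Measure X}
    {s : X → X → ENNReal} (hs : Measurable (Function.uncurry s)) {f g : X → ENNReal}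
    (hf : Measurable f) (hg : Measurable g)
    (hSf : ∀ᵐ x ∂μ, ∫⁻ y, s x y * f y ∂μ ≤ f x) (hSg : ∀ᵐ x ∂μ, ∫⁻ y, s x y * g y ∂μ ≤ g x)
    {α : ℝ} (hα : 0 < α) (hα1 : α < 1) :
    ∀ᵐ x ∂μ, ∫⁻ y, s x y * (f y ^ α * g y ^ (1 - α)) ∂μ ≤ f x ^ α * g x ^ (1 - α) := by
  filter_upwards [hSf, hSg] with x hSfx hSgx
  calc ∫⁻ y, s x y * (f y ^ α * g y ^ (1 - α)) ∂μ
      ≤ (∫⁻ y, s x y * f y ∂μ) ^ α * (∫⁻ y, s x y * g y ∂μ) ^ (1 - α) :=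
        lintegral_mul_rpow_mul_rpow_le (hs.comp measurable_prodMk_left).aemeasurable
          hf.aemeasurable hg.aemeasurable hα.le (by linarith) (by ring)
    _ ≤ f x ^ α * g x ^ (1 - α) := by gcongr

theorem seminorm_eq_zero_of_le_top_smul {X : Type*} {N : (X → ENNReal) → ENNReal}
    (hN_smul : ∀ (c : ENNReal) u, N (c • u) = c * N u) (hN_mono : Monotone N)
    {f u : X → ENNReal} (hf : N f = 0) (hu : u ≤ (⊤ : ENNReal) • f) : N u = 0 :=
  le_antisymm ((hN_mono hu).trans_eq (by rw [hN_smul, hf, mul_zero])) bot_le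

theorem ENNReal.rpow_mul_rpow_le_top_mul {a : ENNReal} {p : ℝ} (hp : 0 < p) (b : ENNReal) (q : ℝ) :
    a ^ p * b ^ q ≤ ⊤ * a := by
  rcases eq_or_ne a 0 with rfl | ha
  · simp [ENNReal.zero_rpow_of_pos hp]
  · simp [ENNReal.top_mul ha]

theorem seminorm_rpow_mul_rpow_le_one {X : Type*} {N : (X → ENNReal) → ENNReal}
    (hN_add : ∀ u v, N (u + v) ≤ N u + N v) (hN_smul : ∀ (c : ENNReal) u, N (c • u) = c * N u)
    (hN_mono : Monotone N) {f g : X → ENNReal} (hf : N f ≤ 1) (hg : N g ≤ 1)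
    {α : ℝ} (hα : 0 < α) (hα1 : α < 1) :
    N (fun x => f x ^ α * g x ^ (1 - α)) ≤ 1 :=
  calc N (fun x => f x ^ α * g x ^ (1 - α))
      ≤ N (ENNReal.ofReal α • f + ENNReal.ofReal (1 - α) • g) := hN_mono fun x =>
        ENNReal.geom_mean_le_arith_mean2_weighted hα (by linarith) (by ring) (f x) (g x)
    _ ≤ ENNReal.ofReal α * N f + ENNReal.ofReal (1 - α) * N g := by
        simpa only [hN_smul] using hN_add (ENNReal.ofReal α • f) (ENNReal.ofReal (1 - α) • g)
    _ ≤ ENNReal.ofReal α * 1 + ENNReal.ofReal (1 - α) * 1 := by gcongr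
    _ = 1 := by
        rw [mul_one, mul_one, ← ENNReal.ofReal_add hα.le (by linarith), add_sub_cancel,
          ENNReal.ofReal_one]

theorem seminorm_rpow_mul_rpow_le_of_ne {X : Type*} {N : (X → ENNReal) → ENNReal}
    (hN_add : ∀ u v, N (u + v) ≤ N u + N v) (hN_smul : ∀ (c : ENNReal) u, N (c • u) = c * N u)
    (hN_mono : Monotone N) {f g : X → ENNReal} (hf0 : N f ≠ 0) (hftop : N f ≠ ⊤)
    (hg0 : N g ≠ 0) (hgtop : N g ≠ ⊤) {α : ℝ} (hα : 0 < α) (hα1 : α < 1) :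
    N (fun x => f x ^ α * g x ^ (1 - α)) ≤ N f ^ α * N g ^ (1 - α) := by
  have hβ : 0 < 1 - α := by linarith
  have hnormalize : (fun x => f x ^ α * g x ^ (1 - α)) = (N f ^ α * N g ^ (1 - α)) •
      fun x => (((N f)⁻¹ • f) x) ^ α * (((N g)⁻¹ • g) x) ^ (1 - α) := funext fun x => by
    conv_lhs => rw [← ENNReal.mul_inv_cancel_left (b := f x) hf0 hftop,
      ← ENNReal.mul_inv_cancel_left (b := g x) hg0 hgtop]
    simp only [Pi.smul_apply, smul_eq_mul, ENNReal.mul_rpow_of_nonneg _ _ hα.le,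
      ENNReal.mul_rpow_of_nonneg _ _ hβ.le]
    ring
  have hf1 : N ((N f)⁻¹ • f) ≤ 1 := by rw [hN_smul, ENNReal.inv_mul_cancel hf0 hftop]
  have hg1 : N ((N g)⁻¹ • g) ≤ 1 := by rw [hN_smul, ENNReal.inv_mul_cancel hg0 hgtop]
  rw [hnormalize, hN_smul]
  exact mul_le_of_le_one_right'
    (seminorm_rpow_mul_rpow_le_one hN_add hN_smul hN_mono hf1 hg1 hα hα1)

theorem seminorm_rpow_mul_rpow_le {X : Type*} {N : (X → ENNReal) → ENNReal}
    (hN_add : ∀ u v, N (u + v) ≤ N u + N v) (hN_smul : ∀ (c : ENNReal) u, N (c • u) = c * N u)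
    (hN_mono : Monotone N) (f g : X → ENNReal) {α : ℝ} (hα : 0 < α) (hα1 : α < 1) :
    N (fun x => f x ^ α * g x ^ (1 - α)) ≤ N f ^ α * N g ^ (1 - α) := by
  have hβ : 0 < 1 - α := by linarith
  rcases eq_zero_or_pos (N f) with hf0 | hf0
  · rw [seminorm_eq_zero_of_le_top_smul hN_smul hN_mono hf0 fun x =>
      ENNReal.rpow_mul_rpow_le_top_mul hα (g x) _]
    exact bot_le
  rcases eq_zero_or_pos (N g) with hg0 | hg0
  · rw [seminorm_eq_zero_of_le_top_smul hN_smul hN_mono hg0 fun x =>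
      mul_comm (f x ^ α) _ ▸ ENNReal.rpow_mul_rpow_le_top_mul hβ (f x) _]
    exact bot_le
  rcases eq_or_ne (N f) ⊤ with hftop | hftop
  · rw [hftop, ENNReal.top_rpow_of_pos hα,
      ENNReal.top_mul (ENNReal.rpow_pos_of_nonneg hg0 hβ.le).ne']
    exact le_top
  rcases eq_or_ne (N g) ⊤ with hgtop | hgtop
  · rw [hgtop, ENNReal.top_rpow_of_pos hβ,
      ENNReal.mul_top (ENNReal.rpow_pos_of_nonneg hf0 hα.le).ne']
    exact le_top
  exact seminorm_rpow_mul_rpow_le_of_ne hN_add hN_smul hN_mono hf0.ne' hftop hg0.ne' hgtop hα hα1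

theorem kernel_geom_mean_seminorm_general {X : Type*} [MeasurableSpace X] (μ : Measure X)
    (s : X → X → ENNReal) (hs : Measurable (Function.uncurry s))
    (N : (X → ENNReal) → ENNReal)
    (hN_add : ∀ u v, N (u + v) ≤ N u + N v)
    (hN_smul : ∀ (c : ENNReal) u, N (c • u) = c * N u)
    (hN_mono : ∀ u v : X → ENNReal, (∀ᵐ x ∂μ, u x ≤ v x) → N u ≤ N v)
    (f g : X → ENNReal) (hf : Measurable f) (hg : Measurable g)
    (hSf : ∀ᵐ x ∂μ, ∫⁻ y, s x y * f y ∂μ ≤ f x)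
    (hSg : ∀ᵐ x ∂μ, ∫⁻ y, s x y * g y ∂μ ≤ g x)
    (α : ℝ) (hα : 0 < α) (hα1 : α < 1) :
    N (fun x => ∫⁻ y, s x y * (f y ^ α * g y ^ (1 - α)) ∂μ) ≤
      N (fun x => f x ^ α * g x ^ (1 - α)) ∧
    N (fun x => f x ^ α * g x ^ (1 - α)) ≤ N f ^ α * N g ^ (1 - α) :=
  ⟨hN_mono _ _ (ae_lintegral_mul_rpow_mul_rpow_le hs hf hg hSf hSg hα hα1),
    seminorm_rpow_mul_rpow_le hN_add hN_smul (fun u v huv => hN_mono u v (.of_forall huv))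
      f g hα hα1⟩

theorem kernel_geom_mean_seminorm {X : Type*} [MeasurableSpace X] (μ : Measure X)
    [SigmaFinite μ]
    (s : X → X → ENNReal) (hs : Measurable (Function.uncurry s))
    (N : (X → ENNReal) → ENNReal)
    (hN_add : ∀ u v, N (u + v) ≤ N u + N v)
    (hN_smul : ∀ (c : ENNReal) u, N (c • u) = c * N u)
    (hN_mono : ∀ u v : X → ENNReal, (∀ᵐ x ∂μ, u x ≤ v x) → N u ≤ N v)
    (f g : X → ENNReal) (hf : Measurable f) (hg : Measurable g)
    (hf_pos : ∀ᵐ x ∂μ, 0 < f x) (hg_pos : ∀ᵐ x ∂μ, 0 < g x)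
    (hSf : ∀ᵐ x ∂μ, ∫⁻ y, s x y * f y ∂μ ≤ f x)
    (hSg : ∀ᵐ x ∂μ, ∫⁻ y, s x y * g y ∂μ ≤ g x)
    (α : ℝ) (hα : 0 < α) (hα1 : α < 1) :
    N (fun x => ∫⁻ y, s x y * (f y ^ α * g y ^ (1 - α)) ∂μ) ≤
      N (fun x => f x ^ α * g x ^ (1 - α)) ∧
    N (fun x => f x ^ α * g x ^ (1 - α)) ≤ N f ^ α * N g ^ (1 - α) :=
  kernel_geom_mean_seminorm_general μ s hs N hN_add hN_smul hN_mono f g hf hg hSf hSg α hα hα1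
end
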